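/- Let U be a finite nonempty type and n : ℕ. For each i < n let c_i and c'_i assign to every length-i prefix v ∈ (Fin i → U) a pmf on U (so c_i(·|v) ≥ 0 and ∑_{a} c_i(a|v) = 1, and likewise for c'_i). Define the induced pmfs on sequences by P(u) = ∏_{i<n} c_i(u_i | u_0, …, u_{i−1}) and Q(u) = ∏_{i<n} c'_i(u_i | u_0, …, u_{i−1}), and for i < n let P_{<i}(v) = ∏_{j<i} c_j(v_j | v_0, …, v_{j−1}) denote the marginal of P on the first i coordinates. Let F ⊆ Fin n and suppose c_i = c'_i for every i ∉ F. Then ∑_{u} |P(u) − Q(u)| ≤ ∑_{i ∈ F} ∑_{v ∈ (Fin i → U)} P_{<i}(v) · ∑_{a ∈ U} |c_i(a|v) − c'_i(a|v)|. -/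

import Mathlib

/-!
Induction on the length: splitting off the last coordinate, `P(v a) - Q(v a)` equals
`(P_{<n}(v) - Q_{<n}(v)) c'(a|v) + P_{<n}(v) (c(a|v) - c'(a|v))`. Summing the absolute values over
`a` and using `∑ₐ c'(a|v) = 1` bounds the distance at length `n + 1` by the distance at length `n`
plus the expected distance of the last conditional laws. Terms with `i ∉ F` vanish.
-/

/-- The length-`i` prefix of a sequence `v` of length `m`, for `i : Fin m`. -/
def pre {U : Type*} {m : ℕ} (v : Fin m → U) (i : Fin m) : Fin i.val → U :=
  fun j => v (Fin.castLT j (j.isLt.trans i.isLt))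

section SequentialLaw

variable {U : Type*} {n : ℕ}

def seqLaw (c : (i : Fin n) → (Fin i.val → U) → U → ℝ) (u : Fin n → U) : ℝ :=
  ∏ i, c i (pre u i) (u i)

/-- `seqLaw (initLaws c i)` is the marginal `P_{<i}` of `seqLaw c` on the first `i` coordinates. -/
def initLaws (c : (i : Fin n) → (Fin i.val → U) → U → ℝ) (i : Fin n) :
    (j : Fin i.val) → (Fin j.val → U) → U → ℝ :=
  fun j => c (Fin.castLT j (j.isLt.trans i.isLt))

theorem pre_snoc_castSucc (v : Fin n → U) (a : U) (i : Fin n) :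
    pre (Fin.snoc v a : Fin (n + 1) → U) i.castSucc = pre v i :=
  funext fun j => Fin.snoc_castSucc (α := fun _ => U) a v (Fin.castLT j (j.isLt.trans i.isLt))

theorem pre_snoc_last (v : Fin n → U) (a : U) :
    pre (Fin.snoc v a : Fin (n + 1) → U) (Fin.last n) = v :=
  funext fun j => Fin.snoc_castSucc (α := fun _ => U) a v j

theorem seqLaw_snoc (c : (i : Fin (n + 1)) → (Fin i.val → U) → U → ℝ) (v : Fin n → U) (a : U) :
    seqLaw c (Fin.snoc v a) = seqLaw (fun i => c i.castSucc) v * c (Fin.last n) v a := by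
  rw [seqLaw, Fin.prod_univ_castSucc, pre_snoc_last, Fin.snoc_last]
  simp only [pre_snoc_castSucc, Fin.snoc_castSucc]
  rfl

theorem seqLaw_nonneg {c : (i : Fin n) → (Fin i.val → U) → U → ℝ} (hc : ∀ i v a, 0 ≤ c i v a)
    (u : Fin n → U) : 0 ≤ seqLaw c u :=
  Finset.prod_nonneg fun i _ => hc i _ _

end SequentialLaw

theorem Fintype.sum_fin_snoc {U M : Type*} [Fintype U] [AddCommMonoid M] {n : ℕ}
    (f : (Fin (n + 1) → U) → M) :
    ∑ u, f u = ∑ v : Fin n → U, ∑ a, f (Fin.snoc v a) := by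
  rw [← (Fin.snocEquiv fun _ => U).sum_comp, Fintype.sum_prod_type, Finset.sum_comm]
  rfl

theorem sum_abs_mul_sub_mul_le {U : Type*} [Fintype U] {p q : ℝ} {c c' : U → ℝ} (hp : 0 ≤ p)
    (hc'0 : ∀ a, 0 ≤ c' a) (hc'1 : ∑ a, c' a = 1) :
    ∑ a, |p * c a - q * c' a| ≤ |p - q| + p * ∑ a, |c a - c' a| := by
  calc ∑ a, |p * c a - q * c' a|
      ≤ ∑ a, (|p - q| * c' a + p * |c a - c' a|) := by
        refine Finset.sum_le_sum fun a _ => ?_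
        calc |p * c a - q * c' a| = |(p - q) * c' a + p * (c a - c' a)| := by ring_nf
          _ ≤ |(p - q) * c' a| + |p * (c a - c' a)| := abs_add_le _ _
          _ = |p - q| * c' a + p * |c a - c' a| := by
            rw [abs_mul, abs_mul, abs_of_nonneg (hc'0 a), abs_of_nonneg hp]
    _ = |p - q| + p * ∑ a, |c a - c' a| := by
        rw [Finset.sum_add_distrib, ← Finset.mul_sum, ← Finset.mul_sum, hc'1, mul_one]

theorem sum_abs_seqLaw_sub_le {U : Type*} [Fintype U] {n : ℕ}
    (c c' : (i : Fin n) → (Fin i.val → U) → U → ℝ)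
    (hc0 : ∀ i v a, 0 ≤ c i v a) (hc'0 : ∀ i v a, 0 ≤ c' i v a)
    (hc'1 : ∀ i v, ∑ a, c' i v a = 1) :
    ∑ u, |seqLaw c u - seqLaw c' u| ≤
      ∑ i, ∑ v, seqLaw (initLaws c i) v * ∑ a, |c i v a - c' i v a| := by
  induction n with
  | zero => simp [seqLaw]
  | succ n ih =>
    have step := ih (fun i => c i.castSucc) (fun i => c' i.castSucc)
      (fun i => hc0 i.castSucc) (fun i => hc'0 i.castSucc) (fun i => hc'1 i.castSucc)
    calc ∑ u, |seqLaw c u - seqLaw c' u|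
        = ∑ v : Fin n → U, ∑ a, |seqLaw (fun i => c i.castSucc) v * c (Fin.last n) v a -
            seqLaw (fun i => c' i.castSucc) v * c' (Fin.last n) v a| := by
          simp only [Fintype.sum_fin_snoc, seqLaw_snoc]
      _ ≤ ∑ v : Fin n → U, (|seqLaw (fun i => c i.castSucc) v - seqLaw (fun i => c' i.castSucc) v|
            + seqLaw (fun i => c i.castSucc) v * ∑ a, |c (Fin.last n) v a - c' (Fin.last n) v a|) :=
          Finset.sum_le_sum fun v _ =>
            sum_abs_mul_sub_mul_le (seqLaw_nonneg (fun i => hc0 i.castSucc) v)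
              (hc'0 (Fin.last n) v) (hc'1 (Fin.last n) v)
      _ ≤ ∑ i, ∑ v, seqLaw (initLaws c i) v * ∑ a, |c i v a - c' i v a| := by
          rw [Finset.sum_add_distrib, Fin.sum_univ_castSucc]
          exact add_le_add_left step _

theorem stmt_4_general {U : Type*} [Fintype U] {n : ℕ}
    (c c' : (i : Fin n) → (Fin i.val → U) → U → ℝ)
    (hc0 : ∀ i v a, 0 ≤ c i v a)
    (hc'0 : ∀ i v a, 0 ≤ c' i v a) (hc'1 : ∀ i v, ∑ a, c' i v a = 1)
    (F : Finset (Fin n)) (hF : ∀ i ∉ F, c i = c' i) :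
    ∑ u : Fin n → U,
        |(∏ i, c i (pre u i) (u i)) - (∏ i, c' i (pre u i) (u i))| ≤
      ∑ i ∈ F, ∑ v : Fin i.val → U,
        (∏ j : Fin i.val, c (Fin.castLT j (j.isLt.trans i.isLt)) (pre v j) (v j)) *
          ∑ a, |c i v a - c' i v a| := by
  refine (sum_abs_seqLaw_sub_le c c' hc0 hc'0 hc'1).trans_eq
    (Finset.sum_subset (Finset.subset_univ F) fun i _ hi => ?_).symm
  simp [hF i hi]

theorem stmt_4 {U : Type*} [Fintype U] [Nonempty U] {n : ℕ}
    (c c' : (i : Fin n) → (Fin i.val → U) → U → ℝ)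
    (hc0 : ∀ i v a, 0 ≤ c i v a) (hc1 : ∀ i v, ∑ a, c i v a = 1)
    (hc'0 : ∀ i v a, 0 ≤ c' i v a) (hc'1 : ∀ i v, ∑ a, c' i v a = 1)
    (F : Finset (Fin n)) (hF : ∀ i ∉ F, c i = c' i) :
    ∑ u : Fin n → U,
        |(∏ i, c i (pre u i) (u i)) - (∏ i, c' i (pre u i) (u i))| ≤
      ∑ i ∈ F, ∑ v : Fin i.val → U,
        (∏ j : Fin i.val, c (Fin.castLT j (j.isLt.trans i.isLt)) (pre v j) (v j)) *
          ∑ a, |c i v a - c' i v a| :=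
  stmt_4_general c c' hc0 hc'0 hc'1 F hF
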